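/- Let A ∈ ℝ^{n×n} be a nonnegative hollow tridiagonal matrix, i.e., A_{ii} = 0 for all i and A_{ij} = 0 when |i−j| > 1, such that A_{i,i+1}·A_{i+1,i} = 0 for every i ∈ {1,…,n−1}, and A_{i,i+1} > 0 for at least one i. Then Levinger's function r(t) := ρ((1−t)A + tAᵀ) is strictly concave on t ∈ (0,1). -/

import Mathlib

/-!
For `t ∈ (0,1)` the matrices `(1 - t) • A + t • Aᵀ` and `√(t (1 - t)) • (A + Aᵀ)` are both
tridiagonal with zero diagonal, and because `A i (i+1) * A (i+1) i = 0` the products of their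
entries in positions `(i, i+1)` and `(i+1, i)` agree: both are
`t (1 - t) (A i (i+1) + A (i+1) i)²`. Such tridiagonal matrices are conjugate by an invertible
diagonal matrix, so `r t = √(t (1 - t)) * ρ(A + Aᵀ)`. The symmetric matrix `A + Aᵀ` is nonzero,
so its spectral radius is its (positive) operator norm, and `√(t (1 - t))` is strictly concave.
-/

open Matrix

/-- The spectral radius of a real square matrix: the maximum modulus of its
(complex) eigenvalues. -/
noncomputable def specRad {m : Type*} [Fintype m] [DecidableEq m]
    (M : Matrix m m ℝ) : ℝ :=
  (spectralRadius ℂ (M.map (fun x : ℝ => (x : ℂ)))).toReal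

/-- A square matrix is irreducible if its associated directed graph is strongly
connected, i.e. for every pair of indices `i j` some power of the matrix has a
positive `(i,j)` entry. -/
def Irred {m : Type*} [Fintype m] [DecidableEq m] (M : Matrix m m ℝ) : Prop :=
  ∀ i j : m, ∃ k : ℕ, 0 < (M ^ (k + 1)) i j

lemma spectralRadius_smul {𝕜 A : Type*} [NormedField 𝕜] [Ring A] [Algebra 𝕜 A]
    (k : 𝕜) (a : A) : spectralRadius 𝕜 (k • a) = ‖k‖₊ * spectralRadius 𝕜 a := by
  rcases eq_or_ne k 0 with rfl | hk
  · simp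
  · rw [spectralRadius, spectralRadius, ← Units.val_mk0 hk, ← Units.smul_def,
      spectrum.unit_smul_eq_smul, ← Set.image_smul, iSup_image, ENNReal.mul_iSup]
    simp_rw [ENNReal.mul_iSup, Units.smul_def, smul_eq_mul, nnnorm_mul, ENNReal.coe_mul]

section specRad

variable {m : Type*} [Fintype m] [DecidableEq m]

lemma specRad_smul {c : ℝ} (hc : 0 ≤ c) (M : Matrix m m ℝ) :
    specRad (c • M) = c * specRad M := by
  have hmap : (c • M).map (fun x : ℝ => (x : ℂ)) = (c : ℂ) • M.map (fun x : ℝ => (x : ℂ)) := by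
    ext; simp
  rw [specRad, specRad, hmap, spectralRadius_smul, ENNReal.toReal_mul]
  simp [abs_of_nonneg hc]

lemma specRad_eq_of_mul_eq_mul {B C P : Matrix m m ℝ} (hP : IsUnit P) (h : B * P = P * C) :
    specRad B = specRad C := by
  obtain ⟨u, hu⟩ := hP.map Complex.ofRealHom.mapMatrix
  have hconj : B.map Complex.ofRealHom = u * C.map Complex.ofRealHom * u⁻¹ := by
    rw [Units.eq_mul_inv_iff_mul_eq, hu]
    simpa [Matrix.map_mul] using congr_arg (·.map Complex.ofRealHom) h
  have hspec : spectrum ℂ (B.map Complex.ofRealHom) = spectrum ℂ (C.map Complex.ofRealHom) := by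
    rw [hconj, spectrum.units_conjugate]
  have hofReal : (fun x : ℝ => (x : ℂ)) = Complex.ofRealHom := rfl
  rw [specRad, specRad, spectralRadius, spectralRadius, hofReal, hspec]

open scoped Matrix.Norms.L2Operator in
lemma specRad_pos_of_isSymm {M : Matrix m m ℝ} (hM : M.IsSymm) (hne : M ≠ 0) :
    0 < specRad M := by
  have hsa : IsSelfAdjoint (M.map (fun x : ℝ => (x : ℂ))) := by
    ext i j
    simp [hM.apply]
  rw [specRad, hsa.toReal_spectralRadius_complex_eq_norm, norm_pos_iff]
  contrapose! hne
  ext i j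
  simpa using congr_fun₂ hne i j

end specRad

theorem StrictConcaveOn.sqrt {E : Type*} [AddCommMonoid E] [Module ℝ E] {s : Set E}
    {f : E → ℝ} (hf : StrictConcaveOn ℝ s f) (hf₀ : ∀ x ∈ s, 0 ≤ f x) :
    StrictConcaveOn ℝ s fun x => √(f x) :=
  ⟨hf.1, fun x hx y hy hxy a b ha hb hab =>
    calc a • √(f x) + b • √(f y) ≤ √(a • f x + b • f y) :=
          Real.strictConcaveOn_sqrt.concaveOn.2 (hf₀ x hx) (hf₀ y hy) ha.le hb.le hab
      _ < √(f (a • x + b • y)) :=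
          Real.sqrt_lt_sqrt
            (add_nonneg (smul_nonneg ha.le (hf₀ x hx)) (smul_nonneg hb.le (hf₀ y hy)))
            (hf.2 hx hy hxy ha hb hab)⟩

theorem StrictConcaveOn.mul_const {E : Type*} [AddCommMonoid E] [Module ℝ E] {s : Set E}
    {f : E → ℝ} (hf : StrictConcaveOn ℝ s f) {c : ℝ} (hc : 0 < c) :
    StrictConcaveOn ℝ s fun x => f x * c :=
  ⟨hf.1, fun x hx y hy hxy a b ha hb hab => by
    have := mul_lt_mul_of_pos_right (hf.2 hx hy hxy ha hb hab) hc
    simp only [smul_eq_mul] at this ⊢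
    linarith⟩

theorem strictConcaveOn_mul_one_sub : StrictConcaveOn ℝ Set.univ fun t : ℝ => t * (1 - t) :=
  ⟨convex_univ, fun x _ y _ hxy a b ha hb hab => by
    obtain rfl : b = 1 - a := by linarith
    simp only [smul_eq_mul]
    nlinarith [mul_pos (mul_pos ha hb) (sq_pos_of_ne_zero (sub_ne_zero.2 hxy))]⟩

def Matrix.IsTridiagonal {α : Type*} [Zero α] {n : ℕ} (M : Matrix (Fin n) (Fin n) α) : Prop :=
  ∀ i j : Fin n, (j : ℕ) ≠ i + 1 → (i : ℕ) ≠ j + 1 → (i : ℕ) ≠ j → M i j = 0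

namespace Matrix.IsTridiagonal

variable {α : Type*} {n : ℕ} {M N : Matrix (Fin n) (Fin n) α}

theorem transpose [Zero α] (hM : M.IsTridiagonal) : Mᵀ.IsTridiagonal :=
  fun i j hij hji hne => hM j i hji hij hne.symm

theorem add [AddZeroClass α] (hM : M.IsTridiagonal) (hN : N.IsTridiagonal) :
    (M + N).IsTridiagonal := fun i j hij hji hne => by
  simp [hM i j hij hji hne, hN i j hij hji hne]

theorem smul {R : Type*} [Zero α] [SMulZeroClass R α] (c : R) (hM : M.IsTridiagonal) :
    (c • M).IsTridiagonal := fun i j hij hji hne => by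
  simp [hM i j hij hji hne]

theorem exists_mul_diagonal_eq_diagonal_mul [Field α] (hM : M.IsTridiagonal)
    (hN : N.IsTridiagonal) (hdiag : ∀ i, M i i = N i i)
    (hpair : ∀ i j : Fin n, (j : ℕ) = i + 1 →
      ∃ r ≠ 0, M i j * r = N i j ∧ M j i = r * N j i) :
    ∃ d : Fin n → α, (∀ i, d i ≠ 0) ∧ M * diagonal d = diagonal d * N := by
  choose! r hr0 hr using hpair
  let s : ℕ → α := fun k => if h : k + 1 < n then r ⟨k, by omega⟩ ⟨k + 1, h⟩ else 1
  let d : Fin n → α := fun i => ∏ k ∈ Finset.range i, s k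
  have hd_succ : ∀ i j : Fin n, (j : ℕ) = i + 1 → d j = d i * r i j := by
    intro i j hij
    have hj : (i : ℕ) + 1 < n := hij ▸ j.isLt
    have hs : s i = r i j := by
      simp only [s, dif_pos hj]
      congr
      exact hij.symm
    simp only [d, hij, Finset.prod_range_succ, hs]
  have hs0 : ∀ k, s k ≠ 0 := fun k => by
    unfold s
    split_ifs
    exacts [hr0 _ _ rfl, one_ne_zero]
  refine ⟨d, fun i => Finset.prod_ne_zero_iff.mpr fun k _ => hs0 k, ?_⟩
  ext i j
  rw [mul_diagonal, diagonal_mul]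
  by_cases hij : (j : ℕ) = i + 1
  · rw [hd_succ i j hij, ← (hr i j hij).1]
    ring
  by_cases hji : (i : ℕ) = j + 1
  · rw [hd_succ j i hji, (hr j i hji).2]
    ring
  by_cases hne : (i : ℕ) = j
  · obtain rfl := Fin.ext hne
    rw [hdiag, mul_comm]
  · rw [hM i j hij hji hne, hN i j hij hji hne, zero_mul, mul_zero]

end Matrix.IsTridiagonal

/-- The ratio `d (i+1) / d i` of the diagonal similarity in `specRad_levinger_eq`, for
`a = A i (i+1)` and `b = A (i+1) i`. -/
lemma exists_ne_zero_mul_eq_and_eq_mul {K : Type*} [Field K] {p q c a b : K} (hp : p ≠ 0)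
    (hq : q ≠ 0) (hc : c * c = p * q) (hab : a * b = 0) :
    ∃ r ≠ 0, (p * a + q * b) * r = c * (a + b) ∧ p * b + q * a = r * (c * (b + a)) := by
  have hc0 : c ≠ 0 := fun h => mul_ne_zero hp hq (by rw [← hc, h, zero_mul])
  rcases mul_eq_zero.mp hab with rfl | rfl
  · refine ⟨c / q, div_ne_zero hc0 hq, ?_, ?_⟩
    · field_simp
      ring
    · field_simp
      linear_combination -b * hc
  · refine ⟨c / p, div_ne_zero hc0 hp, ?_, ?_⟩
    · field_simp
      ring
    · field_simp
      linear_combination -a * hc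

theorem specRad_levinger_eq {n : ℕ} {A : Matrix (Fin n) (Fin n) ℝ} (hhollow : ∀ i, A i i = 0)
    (htri : A.IsTridiagonal) (hswap : ∀ i j : Fin n, (j : ℕ) = i + 1 → A i j * A j i = 0)
    {t : ℝ} (ht : t ∈ Set.Ioo 0 1) :
    specRad ((1 - t) • A + t • Aᵀ) = √(t * (1 - t)) * specRad (A + Aᵀ) := by
  obtain ⟨ht₀, ht₁⟩ := ht
  have hc : √(t * (1 - t)) * √(t * (1 - t)) = (1 - t) * t := by
    rw [Real.mul_self_sqrt (by nlinarith), mul_comm]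
  obtain ⟨d, hd, hsim⟩ :=
    ((htri.smul (1 - t)).add (htri.transpose.smul t)).exists_mul_diagonal_eq_diagonal_mul
      ((htri.add htri.transpose).smul √(t * (1 - t))) (fun i => by simp [hhollow])
      fun i j hij => by
        simpa using exists_ne_zero_mul_eq_and_eq_mul (sub_ne_zero.2 ht₁.ne') ht₀.ne' hc
          (hswap i j hij)
  have hdiag : IsUnit (diagonal d) := isUnit_diagonal.2 (Pi.isUnit_iff.2 fun i => (hd i).isUnit)
  rw [specRad_eq_of_mul_eq_mul hdiag hsim, specRad_smul (Real.sqrt_nonneg _)]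

theorem levinger_hollow_tridiagonal_strictConcave_general {n : ℕ}
    (A : Matrix (Fin n) (Fin n) ℝ)
    (hhollow : ∀ i : Fin n, A i i = 0)
    (htri : ∀ i j : Fin n,
      (j:ℕ) ≠ (i:ℕ) + 1 → (i:ℕ) ≠ (j:ℕ) + 1 → (i:ℕ) ≠ (j:ℕ) → A i j = 0)
    (hswap : ∀ i j : Fin n, (j:ℕ) = (i:ℕ) + 1 → A i j * A j i = 0)
    (hpos : ∃ i j : Fin n, (j:ℕ) = (i:ℕ) + 1 ∧ 0 < A i j) :
    StrictConcaveOn ℝ (Set.Ioo (0:ℝ) 1)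
      (fun t : ℝ => specRad ((1 - t) • A + t • Aᵀ)) := by
  have hS : A + Aᵀ ≠ 0 := by
    obtain ⟨i, j, hij, hA⟩ := hpos
    have hAji : A j i = 0 := (mul_eq_zero.1 (hswap i j hij)).resolve_left hA.ne'
    refine fun h => hA.ne' ?_
    simpa [hAji] using congr_fun₂ h i j
  have hρ : 0 < specRad (A + Aᵀ) := specRad_pos_of_isSymm (isSymm_add_transpose_self A) hS
  have hconcave := ((strictConcaveOn_mul_one_sub.subset (Set.subset_univ _) (convex_Ioo 0 1)).sqrt
    fun t ht => mul_nonneg ht.1.le (sub_nonneg.2 ht.2.le)).mul_const hρ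
  exact hconcave.congr fun t ht => (specRad_levinger_eq hhollow htri hswap ht).symm

/-- Levinger's function of a nonnegative hollow tridiagonal matrix in which at
most one of each transposed pair `A_{i,i+1}, A_{i+1,i}` is nonzero, and at
least one superdiagonal entry is positive, is strictly concave on `(0,1)`. -/
theorem levinger_hollow_tridiagonal_strictConcave {n : ℕ}
    (A : Matrix (Fin n) (Fin n) ℝ)
    (hnn : ∀ i j, 0 ≤ A i j)
    (hhollow : ∀ i : Fin n, A i i = 0)
    (htri : ∀ i j : Fin n,
      (j:ℕ) ≠ (i:ℕ) + 1 → (i:ℕ) ≠ (j:ℕ) + 1 → (i:ℕ) ≠ (j:ℕ) → A i j = 0)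
    (hswap : ∀ i j : Fin n, (j:ℕ) = (i:ℕ) + 1 → A i j * A j i = 0)
    (hpos : ∃ i j : Fin n, (j:ℕ) = (i:ℕ) + 1 ∧ 0 < A i j) :
    StrictConcaveOn ℝ (Set.Ioo (0:ℝ) 1)
      (fun t : ℝ => specRad ((1 - t) • A + t • Aᵀ)) :=
  levinger_hollow_tridiagonal_strictConcave_general A hhollow htri hswap hpos
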